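/- For all n ≥ 0: ∑_{j=0}^{n} (-1)^j · (j!)²/(j+1) · T(n+1, j+1) = (2n+1)·B_{2n}, where T are the central factorial numbers of the second kind and B the Bernoulli numbers. -/
import Mathlib

/-- Central factorial numbers of the second kind:
T(n,k) = T(n-1,k-1) + k² T(n-1,k), T(0,k)=[k=0], T(n,0)=[n=0]. -/
def centralFactorialT : ℕ → ℕ → ℕ
  | 0, 0 => 1
  | 0, _ + 1 => 0
  | _ + 1, 0 => 0
  | n + 1, k + 1 => centralFactorialT n k + (k + 1) ^ 2 * centralFactorialT n (k + 1)

namespace CFAux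

open Finset Polynomial

lemma T_zero_of_lt : ∀ n k : ℕ, n < k → centralFactorialT n k = 0 := by
  intro n
  induction n with
  | zero =>
    intro k hk
    match k, hk with
    | k + 1, _ => rfl
  | succ n ih =>
    intro k hk
    match k, hk with
    | k + 1, hk =>
      show centralFactorialT n k + (k + 1) ^ 2 * centralFactorialT n (k + 1) = 0
      rw [ih k (by omega), ih (k + 1) (by omega)]
      ring

lemma cf_expand (x : ℚ) (n : ℕ) :
    x ^ n = ∑ k ∈ range (n + 1),
      (centralFactorialT n k : ℚ) * ∏ i ∈ range k, (x - (i : ℚ) ^ 2) := by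
  induction n with
  | zero => simp [centralFactorialT]
  | succ n ih =>
    have key : ∀ k ∈ range (n + 1),
        (centralFactorialT n k : ℚ) * (x * ∏ i ∈ range k, (x - (i : ℚ) ^ 2))
          = (centralFactorialT n k : ℚ) * ∏ i ∈ range (k + 1), (x - (i : ℚ) ^ 2)
            + ((k : ℚ) ^ 2 * centralFactorialT n k) * ∏ i ∈ range k, (x - (i : ℚ) ^ 2) := by
      intro k _
      rw [prod_range_succ]
      ring
    have e : ∑ k ∈ range (n + 1),
          (((k : ℚ) + 1) ^ 2 * centralFactorialT n (k + 1)) * ∏ i ∈ range (k + 1), (x - (i : ℚ) ^ 2)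
        = ∑ k ∈ range (n + 1),
          ((k : ℚ) ^ 2 * centralFactorialT n k) * ∏ i ∈ range k, (x - (i : ℚ) ^ 2) := by
      have h1 := Finset.sum_range_succ'
        (fun k => ((k : ℚ) ^ 2 * centralFactorialT n k) * ∏ i ∈ range k, (x - (i : ℚ) ^ 2)) (n + 1)
      have h2 := Finset.sum_range_succ
        (fun k => ((k : ℚ) ^ 2 * centralFactorialT n k) * ∏ i ∈ range k, (x - (i : ℚ) ^ 2)) (n + 1)
      rw [h2, T_zero_of_lt n (n + 1) (Nat.lt_succ_self n)] at h1
      simp only [Nat.cast_zero, Nat.cast_ofNat, zero_pow, zero_mul, mul_zero, add_zero,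
        Nat.cast_succ] at h1
      linarith [h1]
    calc x ^ (n + 1)
        = ∑ k ∈ range (n + 1),
            (centralFactorialT n k : ℚ) * (x * ∏ i ∈ range k, (x - (i : ℚ) ^ 2)) := by
          rw [pow_succ, ih, Finset.sum_mul]
          exact Finset.sum_congr rfl fun k _ => by ring
      _ = ∑ k ∈ range (n + 1),
            (centralFactorialT n k : ℚ) * ∏ i ∈ range (k + 1), (x - (i : ℚ) ^ 2)
          + ∑ k ∈ range (n + 1),
            ((k : ℚ) ^ 2 * centralFactorialT n k) * ∏ i ∈ range k, (x - (i : ℚ) ^ 2) := by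
          rw [← Finset.sum_add_distrib]
          exact Finset.sum_congr rfl key
      _ = ∑ k ∈ range (n + 1),
            (centralFactorialT n k : ℚ) * ∏ i ∈ range (k + 1), (x - (i : ℚ) ^ 2)
          + ∑ k ∈ range (n + 1),
            (((k : ℚ) + 1) ^ 2 * centralFactorialT n (k + 1)) * ∏ i ∈ range (k + 1), (x - (i : ℚ) ^ 2) := by
          rw [e]
      _ = ∑ k ∈ range (n + 2),
            (centralFactorialT (n + 1) k : ℚ) * ∏ i ∈ range k, (x - (i : ℚ) ^ 2) := by
          rw [Finset.sum_range_succ'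
            (fun k => (centralFactorialT (n + 1) k : ℚ) * ∏ i ∈ range k, (x - (i : ℚ) ^ 2)) (n + 1)]
          have h0 : centralFactorialT (n + 1) 0 = 0 := rfl
          rw [h0]
          simp only [Nat.cast_zero, zero_mul, add_zero]
          rw [← Finset.sum_add_distrib]
          refine Finset.sum_congr rfl fun k _ => ?_
          show _ = (centralFactorialT (n + 1) (k + 1) : ℚ) * _
          have hT : centralFactorialT (n + 1) (k + 1)
              = centralFactorialT n k + (k + 1) ^ 2 * centralFactorialT n (k + 1) := rfl
          rw [hT]
          push_cast
          ring

noncomputable def A (j : ℕ) : ℚ[X] := ∏ i ∈ range j, (X ^ 2 - C (((i : ℚ) + 1) ^ 2))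
noncomputable def P (j : ℕ) : ℚ[X] := X * A j
noncomputable def Q (j : ℕ) : ℚ[X] := C (1 / (2 * ((j : ℚ) + 1))) * ((X - C ((j : ℚ) + 1)) * P j)

lemma P_eval (j : ℕ) (x : ℚ) :
    (P j).eval x = x * ∏ i ∈ range j, (x ^ 2 - ((i : ℚ) + 1) ^ 2) := by
  simp [P, A, eval_prod]

lemma Q_eval (j : ℕ) (x : ℚ) :
    (Q j).eval x = 1 / (2 * ((j : ℚ) + 1)) * ((x - ((j : ℚ) + 1)) * (P j).eval x) := by
  simp [Q]

lemma key (j : ℕ) (x : ℚ) :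
    (x - (j : ℚ)) * (P j).eval (x + 1) = (x + (j : ℚ) + 1) * (P j).eval x := by
  induction j with
  | zero => simp [P_eval]; ring
  | succ j ih =>
    simp only [P_eval, prod_range_succ] at ih ⊢
    push_cast
    linear_combination ((x - (j : ℚ) - 1) * (x + (j : ℚ) + 2)) * ih

lemma Q_succ_sub (j : ℕ) (x : ℚ) :
    (Q j).eval (x + 1) = (Q j).eval x + (P j).eval x := by
  have hd : (2 * ((j : ℚ) + 1)) ≠ 0 := by positivity
  rw [Q_eval, Q_eval]
  have hk := key j x
  field_simp
  linear_combination hk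

lemma sum_P (j N : ℕ) :
    ∑ m ∈ range N, (P j).eval (m : ℚ) = (Q j).eval (N : ℚ) := by
  induction N with
  | zero => simp [Q_eval, P_eval]
  | succ N ih =>
    rw [sum_range_succ, ih]
    push_cast
    rw [Q_succ_sub]

lemma phiP (j : ℕ) (x : ℚ) :
    ∏ i ∈ range (j + 1), (x ^ 2 - (i : ℚ) ^ 2) = x * (P j).eval x := by
  rw [prod_range_succ' (fun i => x ^ 2 - (i : ℚ) ^ 2) j, P_eval]
  push_cast
  ring

lemma pow_odd (n m : ℕ) :
    ((m : ℚ)) ^ (2 * n + 1)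
      = ∑ j ∈ range (n + 1), (centralFactorialT (n + 1) (j + 1) : ℚ) * (P j).eval (m : ℚ) := by
  have h := cf_expand ((m : ℚ) ^ 2) (n + 1)
  rw [Finset.sum_range_succ'
    (fun k => (centralFactorialT (n + 1) k : ℚ) * ∏ i ∈ range k, ((m : ℚ) ^ 2 - (i : ℚ) ^ 2)) (n + 1)] at h
  have h0 : centralFactorialT (n + 1) 0 = 0 := rfl
  rw [h0] at h
  simp only [Nat.cast_zero, zero_mul, add_zero] at h
  have h2 : ((m : ℚ) ^ 2) ^ (n + 1)
      = (m : ℚ) * ∑ j ∈ range (n + 1), (centralFactorialT (n + 1) (j + 1) : ℚ) * (P j).eval (m : ℚ) := by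
    rw [h, Finset.mul_sum]
    exact Finset.sum_congr rfl fun j _ => by rw [phiP]; ring
  rcases Nat.eq_zero_or_pos m with hm | hm
  · subst hm
    simp [P_eval]
  · have hm' : (m : ℚ) ≠ 0 := Nat.cast_ne_zero.mpr (by omega)
    apply mul_left_cancel₀ hm'
    rw [← h2]
    rw [← pow_succ']
    rw [← pow_mul]
    have h3 : 2 * n + 1 + 1 = 2 * (n + 1) := by omega
    rw [h3]

lemma main_eval (n N : ℕ) :
    ∑ m ∈ range N, ((m : ℚ)) ^ (2 * n + 1)
      = ∑ j ∈ range (n + 1), (centralFactorialT (n + 1) (j + 1) : ℚ) * (Q j).eval (N : ℚ) := by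
  calc ∑ m ∈ range N, ((m : ℚ)) ^ (2 * n + 1)
      = ∑ m ∈ range N, ∑ j ∈ range (n + 1),
          (centralFactorialT (n + 1) (j + 1) : ℚ) * (P j).eval (m : ℚ) :=
        Finset.sum_congr rfl fun m _ => pow_odd n m
    _ = ∑ j ∈ range (n + 1), ∑ m ∈ range N,
          (centralFactorialT (n + 1) (j + 1) : ℚ) * (P j).eval (m : ℚ) := Finset.sum_comm
    _ = _ := Finset.sum_congr rfl fun j _ => by rw [← Finset.mul_sum, sum_P]

noncomputable def F (n : ℕ) : ℚ[X] :=
  ∑ i ∈ range (2 * n + 2), C (_root_.bernoulli i * ((2 * n + 2).choose i) / (2 * n + 2)) * X ^ (2 * n + 2 - i)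

noncomputable def G (n : ℕ) : ℚ[X] :=
  ∑ j ∈ range (n + 1), C ((centralFactorialT (n + 1) (j + 1) : ℚ)) * Q j

lemma F_eval (n N : ℕ) : (F n).eval (N : ℚ) = ∑ m ∈ range N, ((m : ℚ)) ^ (2 * n + 1) := by
  have h := sum_range_pow N (2 * n + 1)
  have h22 : 2 * n + 1 + 1 = 2 * n + 2 := by omega
  rw [h22] at h
  rw [h, F]
  simp only [eval_finset_sum, eval_mul, eval_C, eval_pow, eval_X]
  refine Finset.sum_congr rfl fun i hi => ?_
  push_cast
  ring

lemma G_eval (n N : ℕ) :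
    (G n).eval (N : ℚ)
      = ∑ j ∈ range (n + 1), (centralFactorialT (n + 1) (j + 1) : ℚ) * (Q j).eval (N : ℚ) := by
  simp [G, eval_finset_sum]

lemma FG (n : ℕ) : F n = G n := by
  apply Polynomial.eq_of_infinite_eval_eq
  apply Set.infinite_of_injective_forall_mem (f := fun N : ℕ => (N : ℚ))
    (Nat.cast_injective)
  intro N
  show (F n).eval (N : ℚ) = (G n).eval (N : ℚ)
  rw [F_eval, G_eval, main_eval]

lemma A_coeff0 (j : ℕ) : (A j).coeff 0 = (-1) ^ j * (j.factorial : ℚ) ^ 2 := by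
  induction j with
  | zero => simp [A]
  | succ j ih =>
    have : A (j + 1) = A j * (X ^ 2 - C (((j : ℚ) + 1) ^ 2)) := by
      rw [A, prod_range_succ, ← A]
    have hc : (X ^ 2 - C (((j : ℚ) + 1) ^ 2)).coeff 0 = -(((j : ℚ) + 1) ^ 2) := by
      rw [Polynomial.coeff_sub, Polynomial.coeff_X_pow, Polynomial.coeff_C]
      norm_num
    rw [this, Polynomial.mul_coeff_zero, ih, hc, Nat.factorial_succ]
    push_cast
    ring

lemma A_coeff1 (j : ℕ) : (A j).coeff 1 = 0 := by
  induction j with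
  | zero => simp [A, Polynomial.coeff_one]
  | succ j ih =>
    have : A (j + 1) = A j * (X ^ 2 - C (((j : ℚ) + 1) ^ 2)) := by
      rw [A, prod_range_succ, ← A]
    rw [this, mul_sub, Polynomial.coeff_sub, Polynomial.coeff_mul_X_pow',
      Polynomial.coeff_mul_C, ih]
    norm_num

lemma Q_coeff2 (j : ℕ) :
    (Q j).coeff 2 = (-1) ^ j * (j.factorial : ℚ) ^ 2 / (2 * ((j : ℚ) + 1)) := by
  have e1 : (X * (X * A j)).coeff 2 = (A j).coeff 0 := by
    rw [show (2 : ℕ) = 1 + 1 from rfl, Polynomial.coeff_X_mul,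
      show (1 : ℕ) = 0 + 1 from rfl, Polynomial.coeff_X_mul]
  have e2 : (C ((j : ℚ) + 1) * (X * A j)).coeff 2 = 0 := by
    rw [Polynomial.coeff_C_mul, show (2 : ℕ) = 1 + 1 from rfl, Polynomial.coeff_X_mul,
      A_coeff1, mul_zero]
  rw [Q, P, Polynomial.coeff_C_mul, sub_mul, Polynomial.coeff_sub, e1, e2, A_coeff0]
  ring

lemma F_coeff2 (n : ℕ) :
    (F n).coeff 2 = _root_.bernoulli (2 * n) * ((2 * n + 2).choose (2 * n)) / (2 * n + 2) := by
  rw [F, Polynomial.finset_sum_coeff]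
  rw [Finset.sum_eq_single (2 * n)]
  · have hs : 2 * n + 2 - 2 * n = 2 := by omega
    rw [hs, Polynomial.coeff_C_mul, Polynomial.coeff_X_pow, if_pos rfl, mul_one]
  · intro i hi hne
    rw [Polynomial.coeff_C_mul, Polynomial.coeff_X_pow, if_neg, mul_zero]
    have := Finset.mem_range.mp hi
    omega
  · intro h
    exact absurd (Finset.mem_range.mpr (by omega)) h

lemma G_coeff2 (n : ℕ) :
    (G n).coeff 2 = ∑ j ∈ range (n + 1),
      (centralFactorialT (n + 1) (j + 1) : ℚ)
        * ((-1) ^ j * (j.factorial : ℚ) ^ 2 / (2 * ((j : ℚ) + 1))) := by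
  rw [G, Polynomial.finset_sum_coeff]
  exact Finset.sum_congr rfl fun j _ => by rw [Polynomial.coeff_C_mul, Q_coeff2]

lemma choose_val (n : ℕ) : (2 * n + 2).choose (2 * n) = (n + 1) * (2 * n + 1) := by
  have h := Nat.choose_symm (n := 2 * n + 2) (k := 2) (by omega)
  simp only [show 2 * n + 2 - 2 = 2 * n from by omega] at h
  rw [h, Nat.choose_two_right, show 2 * n + 2 - 1 = 2 * n + 1 from by omega,
    show (2 * n + 2) * (2 * n + 1) = ((n + 1) * (2 * n + 1)) * 2 from by ring,
    Nat.mul_div_cancel _ (by norm_num)]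

end CFAux

theorem sum_centralFactorialT_bernoulli (n : ℕ) :
    ∑ j ∈ Finset.range (n + 1),
        (-1 : ℚ) ^ j * ((j.factorial : ℚ)) ^ 2 / (j + 1) * centralFactorialT (n + 1) (j + 1) =
      (2 * n + 1) * bernoulli (2 * n) := by
  have h2 : (CFAux.F n).coeff 2 = (CFAux.G n).coeff 2 := by rw [CFAux.FG n]
  rw [CFAux.F_coeff2, CFAux.G_coeff2, CFAux.choose_val] at h2
  have hL : ∑ j ∈ Finset.range (n + 1),
      (-1 : ℚ) ^ j * ((j.factorial : ℚ)) ^ 2 / (j + 1) * centralFactorialT (n + 1) (j + 1)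
      = 2 * ∑ j ∈ Finset.range (n + 1),
          (centralFactorialT (n + 1) (j + 1) : ℚ)
            * ((-1) ^ j * (j.factorial : ℚ) ^ 2 / (2 * ((j : ℚ) + 1))) := by
    rw [Finset.mul_sum]
    refine Finset.sum_congr rfl fun j _ => ?_
    have hj : ((j : ℚ) + 1) ≠ 0 := by positivity
    field_simp
  rw [hL, ← h2]
  have hn : ((n : ℚ) + 1) ≠ 0 := by positivity
  push_cast
  field_simp
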